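/- Let µ, ν be Borel probability measures on ℝ^d with finite second moments, γ_φ a tangent element at µ and γ_ψ a tangent element at ν. Then the infimum, over all geodesic paths η from µ to ν and all parallel transports Ψ of γ_φ along η, of d_ν((e₁)_#Ψ, γ_ψ)², equals the infimum, over all geodesic paths η' from ν to µ and all parallel transports Ψ' of γ_ψ along η', of d_µ(γ_φ, (e₁)_#Ψ')². -/

import Mathlib

open MeasureTheory
open scoped ENNReal NNReal unitInterval

noncomputable section

abbrev Rd (d : ℕ) := EuclideanSpace ℝ (Fin d)

abbrev Curves (E : Type*) [TopologicalSpace E] := C(unitInterval, E)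

instance (E : Type*) [TopologicalSpace E] : MeasurableSpace (Curves E) := borel _
instance (E : Type*) [TopologicalSpace E] : BorelSpace (Curves E) := ⟨rfl⟩

/-- Evaluation at time `t` of a continuous curve. -/
def ev {E : Type*} [TopologicalSpace E] (t : unitInterval) (f : Curves E) : E := f t

/-- First-component curve of a curve in a product space. -/
def p₁ {E F : Type*} [TopologicalSpace E] [TopologicalSpace F] (ψ : Curves (E × F)) : Curves E :=
  ⟨fun t => (ψ t).1, continuous_fst.comp ψ.continuous⟩

/-- Finite second moment. -/
def FinSM {E : Type*} [MeasurableSpace E] [NormedAddCommGroup E] (μ : Measure E) : Prop :=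
  ∫⁻ x, (‖x‖₊ : ℝ≥0∞) ^ 2 ∂μ < ⊤

/-- A tangent element at `μ`. -/
def IsTangent {E : Type*} [MeasurableSpace E] [NormedAddCommGroup E]
    (μ : Measure E) (γ : Measure (E × E)) : Prop :=
  IsProbabilityMeasure γ ∧ γ.map Prod.fst = μ ∧ FinSM (γ.map Prod.snd)

/-- Parallel transport of a tangent element `γ` along a Lagrangian path `η`. -/
def IsParallelTransport {E : Type*} [TopologicalSpace E] [MeasurableSpace E]
    (γ : Measure (E × E)) (η : Measure (Curves E)) (Ψ : Measure (Curves (E × E))) : Prop :=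
  IsProbabilityMeasure Ψ ∧
  (∀ᵐ ψ ∂Ψ, ∀ t : unitInterval, (ψ t).2 = (ψ 0).2) ∧
  Ψ.map p₁ = η ∧
  Ψ.map (ev 0) = γ

/-- Squared 2-Wasserstein distance between measures on `ℝ^d` (Euclidean cost). -/
def W2sq {d : ℕ} (μ ν : Measure (Rd d)) : ℝ≥0∞ :=
  ⨅ (γ : Measure (Rd d × Rd d)) (_ : γ.map Prod.fst = μ) (_ : γ.map Prod.snd = ν),
    ∫⁻ p, (‖p.1 - p.2‖₊ : ℝ≥0∞) ^ 2 ∂γ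

/-- Squared distance `d_µ(γ, γ')²` between two tangent elements over the same base
measure: infimum of `∫ |z - z'|²` over measures on `ℝ^d × ℝ^d × ℝ^d` whose
`(x,z)`-marginal is `γ` and whose `(x,z')`-marginal is `γ'`. -/
def dsq {d : ℕ} (γ γ' : Measure (Rd d × Rd d)) : ℝ≥0∞ :=
  ⨅ (Θ : Measure (Rd d × Rd d × Rd d))
    (_ : Θ.map (fun p => (p.1, p.2.1)) = γ)
    (_ : Θ.map (fun p => (p.1, p.2.2)) = γ'),
    ∫⁻ p, (‖p.2.1 - p.2.2‖₊ : ℝ≥0∞) ^ 2 ∂Θ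

/-- The affine interpolation curve `t ↦ (1-t)x + ty`. -/
def geodCurve {d : ℕ} (x y : Rd d) : Curves (Rd d) :=
  ⟨fun t => (1 - (t : ℝ)) • x + (t : ℝ) • y, by fun_prop⟩

/-- `η` is a geodesic path from `μ` to `ν`: it is the law of `t ↦ (1-t)X + tY`
for `(X, Y)` an optimal coupling for `W₂(μ, ν)`. -/
def IsGeodesicPath {d : ℕ} (μ ν : Measure (Rd d)) (η : Measure (Curves (Rd d))) : Prop :=
  ∃ g : Measure (Rd d × Rd d),
    g.map Prod.fst = μ ∧ g.map Prod.snd = ν ∧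
    (∫⁻ p, (‖p.1 - p.2‖₊ : ℝ≥0∞) ^ 2 ∂g) = W2sq μ ν ∧
    η = g.map (fun p => geodCurve p.1 p.2)

/-!
Reversing a geodesic path from `μ` to `ν` gives one from `ν` to `μ`. Given a parallel
transport `Ψ` of `γφ` along a geodesic path and a coupling `Θ` of its endpoint law
`(e₁)_#Ψ` with `γψ`, disintegrate `Θ` with respect to `(e₁)_#Ψ` and glue it to `Ψ`: each
transported curve now also carries a vector `z'` drawn from `γψ` given its endpoint.
Running the base curve backwards while holding `z'` fixed is a parallel transport of `γψ`
along the reversed path. Its endpoint `(x₀, z')` is coupled with `(x₀, z) ∼ γφ` at the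
cost of `Θ`, since the transported vector `z` is the same at times `0` and `1`. Hence the
right-hand infimum is at most the left-hand one, and by the symmetry of `dsq` the
situation is symmetric in `(μ, γφ)` and `(ν, γψ)`.
-/

section Gluing

variable {α β γ : Type*} [MeasurableSpace α] [MeasurableSpace β] [MeasurableSpace γ]

theorem MeasureTheory.Measure.map_prodMap_compProd_comap (P : Measure α) [SFinite P]
    (κ : ProbabilityTheory.Kernel β γ) [ProbabilityTheory.IsSFiniteKernel κ]
    {f : α → β} (hf : Measurable f) :
    (P.compProd (κ.comap f hf)).map (Prod.map f id) = (P.map f).compProd κ := by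
  ext s hs
  rw [Measure.map_apply (hf.prodMap measurable_id) hs,
    Measure.compProd_apply (hs.preimage (hf.prodMap measurable_id)), Measure.compProd_apply hs,
    lintegral_map (ProbabilityTheory.Kernel.measurable_kernel_prodMk_left hs) hf]
  rfl

theorem MeasureTheory.Measure.exists_fst_eq_map_prodMap_eq [StandardBorelSpace γ] [Nonempty γ]
    (P : Measure α) [SFinite P] {f : α → β} (hf : Measurable f)
    (ρ : Measure (β × γ)) [IsFiniteMeasure ρ] (hρ : ρ.fst = P.map f) :
    ∃ Λ : Measure (α × γ), Λ.fst = P ∧ Λ.map (Prod.map f id) = ρ :=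
  ⟨P.compProd (ρ.condKernel.comap f hf), Measure.fst_compProd _ _, by
    rw [Measure.map_prodMap_compProd_comap P _ hf, ← hρ, ρ.disintegrate]⟩

end Gluing

section Curves

variable {E F : Type*} [TopologicalSpace E] [TopologicalSpace F]

def rev (f : Curves E) : Curves E :=
  f.comp ⟨unitInterval.symm, unitInterval.continuous_symm⟩

theorem continuous_rev : Continuous (rev (E := E)) :=
  ContinuousMap.continuous_precomp _

theorem continuous_p₁ : Continuous (p₁ (E := E) (F := F)) :=
  ContinuousMap.continuous_postcomp (ContinuousMap.fst (α := E) (β := F))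

def reverseTransport (p : Curves (E × F) × F) : Curves (E × F) :=
  (p₁ (rev p.1)).prodMk (ContinuousMap.const _ p.2)

theorem continuous_reverseTransport : Continuous (reverseTransport (E := E) (F := F)) := by
  apply ContinuousMap.continuous_of_continuous_uncurry
  exact (continuous_fst.comp (continuous_eval.comp ((continuous_fst.comp continuous_fst).prodMk
    (unitInterval.continuous_symm.comp continuous_snd)))).prodMk
    (continuous_snd.comp continuous_fst)

theorem isClosed_setOf_snd_const [T2Space F] :
    IsClosed {ψ : Curves (E × F) | ∀ t, (ψ t).2 = (ψ 0).2} := by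
  simp only [Set.ofPred_forall]
  exact isClosed_iInter fun t => isClosed_eq (continuous_snd.comp (continuous_eval_const t))
    (continuous_snd.comp (continuous_eval_const 0))

end Curves

section Transport

variable {E : Type*} [TopologicalSpace E] [MeasurableSpace E] [BorelSpace E]

theorem measurable_ev (t : unitInterval) : Measurable (ev (E := E) t) :=
  (continuous_eval_const t).measurable

variable [SecondCountableTopology E]

theorem map_ev_zero_reverseTransport (Λ : Measure (Curves (E × E) × E)) :
    (Λ.map reverseTransport).map (ev 0) = Λ.map fun p => ((p.1 1).1, p.2) := by
  rw [Measure.map_map (measurable_ev 0) continuous_reverseTransport.measurable]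
  congr 1
  funext p
  simp [reverseTransport, rev, ev, p₁]

theorem map_ev_one_reverseTransport (Λ : Measure (Curves (E × E) × E)) :
    (Λ.map reverseTransport).map (ev 1) = Λ.map fun p => ((p.1 0).1, p.2) := by
  rw [Measure.map_map (measurable_ev 1) continuous_reverseTransport.measurable]
  congr 1
  funext p
  simp [reverseTransport, rev, ev, p₁]

theorem map_p₁_reverseTransport (Λ : Measure (Curves (E × E) × E)) :
    (Λ.map reverseTransport).map p₁ = (Λ.fst.map p₁).map rev := by
  rw [Measure.fst, Measure.map_map continuous_p₁.measurable continuous_reverseTransport.measurable,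
    Measure.map_map continuous_p₁.measurable measurable_fst,
    Measure.map_map continuous_rev.measurable (continuous_p₁.measurable.comp measurable_fst)]
  rfl

theorem isParallelTransport_map_reverseTransport [T2Space E]
    (Λ : Measure (Curves (E × E) × E)) [IsProbabilityMeasure Λ] :
    IsParallelTransport (Λ.map fun p => ((p.1 1).1, p.2)) ((Λ.fst.map p₁).map rev)
      (Λ.map reverseTransport) :=
  ⟨Measure.isProbabilityMeasure_map continuous_reverseTransport.aemeasurable,
    (ae_map_iff continuous_reverseTransport.aemeasurable
      isClosed_setOf_snd_const.measurableSet).2 (.of_forall fun _ _ => rfl),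
    map_p₁_reverseTransport Λ, map_ev_zero_reverseTransport Λ⟩

variable [StandardBorelSpace E] [Nonempty E]

theorem exists_fst_eq_map_ev_one_eq (Ψ : Measure (Curves (E × E))) [IsProbabilityMeasure Ψ]
    (Θ : Measure (E × E × E)) (hΘ : Θ.map (fun p => (p.1, p.2.1)) = Ψ.map (ev 1)) :
    ∃ Λ : Measure (Curves (E × E) × E), Λ.fst = Ψ ∧
      Λ.map (fun p => ((p.1 1).1, (p.1 1).2, p.2)) = Θ := by
  have : IsProbabilityMeasure (Θ.map fun p => (p.1, p.2.1)) :=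
    hΘ ▸ Measure.isProbabilityMeasure_map (measurable_ev 1).aemeasurable
  have := Measure.isProbabilityMeasure_of_map (μ := Θ) fun p => (p.1, p.2.1)
  let assoc : (E × E) × E ≃ᵐ E × E × E := MeasurableEquiv.prodAssoc
  obtain ⟨Λ, hΛΨ, hΛΘ⟩ :=
      Measure.exists_fst_eq_map_prodMap_eq Ψ (measurable_ev 1) (Θ.map assoc.symm) <| by
        rw [Measure.fst, Measure.map_map measurable_fst assoc.symm.measurable, ← hΘ]
        rfl
  refine ⟨Λ, hΛΨ, ?_⟩
  rw [show (fun p : Curves (E × E) × E => ((p.1 1).1, (p.1 1).2, p.2)) =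
      assoc ∘ Prod.map (ev 1) id from rfl,
    ← Measure.map_map assoc.measurable ((measurable_ev 1).prodMap measurable_id), hΛΘ,
    assoc.map_map_symm]

end Transport

section Couplings

variable {d : ℕ} {α : Type*} [MeasurableSpace α]

theorem rev_geodCurve {d : ℕ} (x y : Rd d) : rev (geodCurve x y) = geodCurve y x := by
  ext t : 1
  simp only [rev, geodCurve, ContinuousMap.comp_apply, ContinuousMap.coe_mk,
    unitInterval.coe_symm_eq, sub_sub_cancel]
  exact add_comm _ _

theorem W2sq_map_le (Λ : Measure α) {X Y : α → Rd d} (hX : Measurable X) (hY : Measurable Y) :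
    W2sq (Λ.map X) (Λ.map Y) ≤ ∫⁻ a, (‖X a - Y a‖₊ : ℝ≥0∞) ^ 2 ∂Λ := by
  refine iInf₂_le_of_le (Λ.map fun a => (X a, Y a)) ?_ <| iInf_le_of_le ?_ ?_
  · rw [Measure.map_map measurable_fst (hX.prodMk hY)]; rfl
  · rw [Measure.map_map measurable_snd (hX.prodMk hY)]; rfl
  · rw [lintegral_map (by fun_prop) (hX.prodMk hY)]

theorem W2sq_comm (μ ν : Measure (Rd d)) : W2sq μ ν = W2sq ν μ := by
  suffices h : ∀ μ ν : Measure (Rd d), W2sq ν μ ≤ W2sq μ ν from le_antisymm (h ν μ) (h μ ν)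
  intro μ ν
  refine le_iInf₂ fun g hgμ => le_iInf fun hgν => ?_
  subst hgμ hgν
  refine (W2sq_map_le g measurable_snd measurable_fst).trans_eq (lintegral_congr fun p => ?_)
  rw [← nnnorm_neg, neg_sub]

theorem dsq_map_le (Λ : Measure α) {X Z Z' : α → Rd d} (hX : Measurable X) (hZ : Measurable Z)
    (hZ' : Measurable Z') :
    dsq (Λ.map fun a => (X a, Z a)) (Λ.map fun a => (X a, Z' a)) ≤
      ∫⁻ a, (‖Z a - Z' a‖₊ : ℝ≥0∞) ^ 2 ∂Λ := by
  have hXZZ' : Measurable fun a => (X a, Z a, Z' a) := hX.prodMk (hZ.prodMk hZ')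
  refine iInf₂_le_of_le (Λ.map fun a => (X a, Z a, Z' a)) ?_ <| iInf_le_of_le ?_ ?_
  · rw [Measure.map_map (by fun_prop) hXZZ']; rfl
  · rw [Measure.map_map (by fun_prop) hXZZ']; rfl
  · rw [lintegral_map (by fun_prop) hXZZ']

theorem dsq_comm (γ γ' : Measure (Rd d × Rd d)) : dsq γ γ' = dsq γ' γ := by
  suffices h : ∀ γ γ' : Measure (Rd d × Rd d), dsq γ' γ ≤ dsq γ γ' from
    le_antisymm (h γ' γ) (h γ γ')
  intro γ γ'
  refine le_iInf₂ fun Θ hΘγ => le_iInf fun hΘγ' => ?_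
  subst hΘγ hΘγ'
  refine (dsq_map_le Θ measurable_fst measurable_snd.snd measurable_snd.fst).trans_eq
    (lintegral_congr fun p => ?_)
  rw [← nnnorm_neg, neg_sub]

theorem measurable_geodCurve : Measurable fun p : Rd d × Rd d => geodCurve p.1 p.2 := by
  refine (ContinuousMap.continuous_of_continuous_uncurry _ ?_).measurable
  change Continuous fun q : (Rd d × Rd d) × unitInterval =>
    (1 - (q.2 : ℝ)) • q.1.1 + (q.2 : ℝ) • q.1.2
  fun_prop

theorem IsGeodesicPath.map_rev {μ ν : Measure (Rd d)} {η : Measure (Curves (Rd d))}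
    (hη : IsGeodesicPath μ ν η) : IsGeodesicPath ν μ (η.map rev) := by
  obtain ⟨g, hgμ, hgν, hg, rfl⟩ := hη
  refine ⟨g.map Prod.swap, Measure.fst_map_swap.trans hgν, Measure.snd_map_swap.trans hgμ, ?_, ?_⟩
  · rw [lintegral_map (by fun_prop) measurable_swap, W2sq_comm, ← hg]
    exact lintegral_congr fun p => by rw [Prod.fst_swap, Prod.snd_swap, ← nnnorm_neg, neg_sub]
  · rw [Measure.map_map continuous_rev.measurable measurable_geodCurve,
      Measure.map_map measurable_geodCurve measurable_swap]
    exact congrArg g.map (funext fun p => rev_geodCurve p.1 p.2)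

end Couplings

def transportDistSq {d : ℕ} (μ ν : Measure (Rd d)) (γ γ' : Measure (Rd d × Rd d)) : ℝ≥0∞ :=
  ⨅ (η : Measure (Curves (Rd d))) (_ : IsGeodesicPath μ ν η)
    (Ψ : Measure (Curves (Rd d × Rd d))) (_ : IsParallelTransport γ η Ψ),
    dsq (Ψ.map (ev 1)) γ'

theorem lintegral_nnnorm_sub_sq_ev_zero_eq_ev_one {d : ℕ}
    {Λ : Measure (Curves (Rd d × Rd d) × Rd d)}
    (hΛ : ∀ᵐ ψ ∂Λ.fst, ∀ t : unitInterval, (ψ t).2 = (ψ 0).2) :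
    ∫⁻ p, (‖p.2 - (p.1 0).2‖₊ : ℝ≥0∞) ^ 2 ∂Λ = ∫⁻ p, (‖(p.1 1).2 - p.2‖₊ : ℝ≥0∞) ^ 2 ∂Λ := by
  refine lintegral_congr_ae ((ae_of_ae_map measurable_fst.aemeasurable hΛ).mono fun p hp => ?_)
  dsimp only
  rw [hp 1, ← nnnorm_neg, neg_sub]

theorem transportDistSq_swap_le {d : ℕ} (μ ν : Measure (Rd d)) (γ γ' : Measure (Rd d × Rd d)) :
    transportDistSq ν μ γ' γ ≤ transportDistSq μ ν γ γ' := by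
  refine le_iInf₂ fun η hη => le_iInf₂ fun Ψ hΨ => le_iInf₂ fun Θ hΘΨ => le_iInf fun hΘγ' => ?_
  obtain ⟨hΨprob, hΨconst, hΨη, hΨγ⟩ := hΨ
  obtain ⟨Λ, hΛΨ, hΛΘ⟩ := exists_fst_eq_map_ev_one_eq Ψ Θ hΘΨ
  have : IsProbabilityMeasure Λ.fst := hΛΨ ▸ hΨprob
  have : IsProbabilityMeasure Λ :=
    (Measure.isProbabilityMeasure_map_iff measurable_fst.aemeasurable).1 this
  have hΛγ' : Λ.map (fun p => ((p.1 1).1, p.2)) = γ' := by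
    rw [← hΘγ', ← hΛΘ, Measure.map_map (by fun_prop) (by fun_prop)]
    rfl
  have hΛγ : Λ.map (fun p => ((p.1 0).1, (p.1 0).2)) = γ := by
    rw [← hΨγ, ← hΛΨ, Measure.fst, Measure.map_map (measurable_ev 0) measurable_fst]
    rfl
  have hΨ' := isParallelTransport_map_reverseTransport Λ
  rw [hΛγ', hΛΨ, hΨη] at hΨ'
  refine iInf₂_le_of_le _ hη.map_rev <| iInf₂_le_of_le _ hΨ' ?_
  calc dsq ((Λ.map reverseTransport).map (ev 1)) γ
      = dsq (Λ.map fun p => ((p.1 0).1, p.2)) (Λ.map fun p => ((p.1 0).1, (p.1 0).2)) := by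
        rw [map_ev_one_reverseTransport, hΛγ]
    _ ≤ ∫⁻ p, (‖p.2 - (p.1 0).2‖₊ : ℝ≥0∞) ^ 2 ∂Λ :=
        dsq_map_le Λ (by fun_prop) measurable_snd (by fun_prop)
    _ = ∫⁻ p, (‖(p.1 1).2 - p.2‖₊ : ℝ≥0∞) ^ 2 ∂Λ :=
        lintegral_nnnorm_sub_sq_ev_zero_eq_ev_one (hΛΨ ▸ hΨconst)
    _ = ∫⁻ p, (‖p.2.1 - p.2.2‖₊ : ℝ≥0∞) ^ 2 ∂Θ := by
        rw [← hΛΘ, lintegral_map (by fun_prop) (by fun_prop)]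

theorem stmt9_general {d : ℕ} (μ ν : Measure (Rd d))
    (γφ γψ : Measure (Rd d × Rd d)) :
    (⨅ (η : Measure (Curves (Rd d))) (_ : IsGeodesicPath μ ν η)
       (Ψ : Measure (Curves (Rd d × Rd d))) (_ : IsParallelTransport γφ η Ψ),
        dsq (Ψ.map (ev 1)) γψ)
    =
    (⨅ (η' : Measure (Curves (Rd d))) (_ : IsGeodesicPath ν μ η')
       (Ψ' : Measure (Curves (Rd d × Rd d))) (_ : IsParallelTransport γψ η' Ψ'),
        dsq γφ (Ψ'.map (ev 1))) := by
  change transportDistSq μ ν γφ γψ = _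
  simp only [dsq_comm γφ]
  exact le_antisymm (transportDistSq_swap_le ν μ γψ γφ) (transportDistSq_swap_le μ ν γφ γψ)

theorem stmt9 {d : ℕ} (μ ν : Measure (Rd d))
    [IsProbabilityMeasure μ] [IsProbabilityMeasure ν] (hμ : FinSM μ) (hν : FinSM ν)
    (γφ γψ : Measure (Rd d × Rd d)) (hφ : IsTangent μ γφ) (hψ : IsTangent ν γψ) :
    (⨅ (η : Measure (Curves (Rd d))) (_ : IsGeodesicPath μ ν η)
       (Ψ : Measure (Curves (Rd d × Rd d))) (_ : IsParallelTransport γφ η Ψ),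
        dsq (Ψ.map (ev 1)) γψ)
    =
    (⨅ (η' : Measure (Curves (Rd d))) (_ : IsGeodesicPath ν μ η')
       (Ψ' : Measure (Curves (Rd d × Rd d))) (_ : IsParallelTransport γψ η' Ψ'),
        dsq γφ (Ψ'.map (ev 1))) :=
  stmt9_general μ ν γφ γψ

end
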